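/- For the slit map s̃(z) = √(z² − 1) mapping the upper half-plane ℍ onto ℍ \ [0,i], and its translate s̃ₓ(z) = x + s̃(z−x), there exists an absolute constant C > 0 such that for all z ∈ ℍ, ∫_{−∞}^{∞} |s̃ₓ(z) − z|² dx < C/(1 + Im z). -/

import Mathlib

/-!
For `w ∈ ℍ` put `s = √(w² - 1)`. Then `(s - w)(s + w) = -1`, and `s`, `w` lie in the same closed
quadrant (`Im s² = Im w²`, both imaginary parts nonnegative), so `‖s - w‖ ≤ ‖s + w‖`. Hence
`‖s - w‖ ≤ 1` and `‖s - w‖ ‖w‖ ≤ ‖s - w‖ ‖s + w‖ = 1`, i.e. `‖s - w‖² (1 + ‖w‖²) ≤ 2`.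
Taking `w = z - x`, the integrand is at most `2 / ((x - Re z)² + 1 + (Im z)²)`, a multiple of a
Cauchy density, whose integral is `2π / √(1 + (Im z)²) < 9 / (1 + Im z)`.
-/

open Complex MeasureTheory Filter

/-- Complex square root with the branch chosen in the closed upper half-plane. -/
noncomputable def csqrtH (w : ℂ) : ℂ :=
  if 0 ≤ (w ^ (1/2 : ℂ)).im then w ^ (1/2 : ℂ) else -(w ^ (1/2 : ℂ))

/-- The slit map at `x`: `s̃ₓ(z) = x + √((z-x)² - 1)`, branch mapping ℍ into ℍ. -/
noncomputable def slitAt (x : ℝ) (z : ℂ) : ℂ := x + csqrtH ((z - x) ^ 2 - 1)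

/-- The complex derivative of the slit map at `x`: `(z-x)/√((z-x)² - 1)`. -/
noncomputable def slitDerivAt (x : ℝ) (z : ℂ) : ℂ := (z - x) / csqrtH ((z - x) ^ 2 - 1)

open Real ProbabilityTheory

lemma csqrtH_sq (w : ℂ) : csqrtH w ^ 2 = w := by
  unfold csqrtH
  split_ifs <;> simp

lemma csqrtH_im_nonneg (w : ℂ) : 0 ≤ (csqrtH w).im := by
  unfold csqrtH
  split_ifs with h
  · exact h
  · simpa using (not_le.mp h).le

lemma measurable_csqrtH : Measurable csqrtH := by
  unfold csqrtH
  exact .ite (measurableSet_le measurable_const (by fun_prop)) (by fun_prop) (by fun_prop)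

lemma norm_sub_le_norm_add_of_nonneg {s w : ℂ} (hre : 0 ≤ s.re * w.re)
    (him : 0 ≤ s.im * w.im) : ‖s - w‖ ≤ ‖s + w‖ := by
  rw [← sq_le_sq₀ (norm_nonneg _) (norm_nonneg _), Complex.sq_norm, Complex.sq_norm,
    normSq_apply, normSq_apply]
  simp only [sub_re, sub_im, add_re, add_im]
  nlinarith

lemma re_mul_re_nonneg_of_im_sq_eq {s w : ℂ} (h : (s ^ 2).im = (w ^ 2).im)
    (hs : 0 ≤ s.im) (hw : 0 < w.im) : 0 ≤ s.re * w.re := by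
  have hprod : s.re * s.im = w.re * w.im := by
    simp only [sq, mul_im] at h
    linarith
  rcases hs.eq_or_lt with hs0 | hs0
  · have : w.re = 0 := by
      rw [← hs0, mul_zero] at hprod
      exact (mul_eq_zero.mp hprod.symm).resolve_right hw.ne'
    simp [this]
  · refine nonneg_of_mul_nonneg_left ?_ hs0
    calc 0 ≤ w.re ^ 2 * w.im := by positivity
      _ = s.re * w.re * s.im := by rw [mul_right_comm, hprod]; ring

lemma norm_sub_sq_mul_one_add_norm_sq_le {s w : ℂ} (hsq : s ^ 2 = w ^ 2 - 1)
    (hs : 0 ≤ s.im) (hw : 0 < w.im) : ‖s - w‖ ^ 2 * (1 + ‖w‖ ^ 2) ≤ 2 := by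
  have hprod : ‖s - w‖ * ‖s + w‖ = 1 := by
    rw [← norm_mul, show (s - w) * (s + w) = -1 by linear_combination hsq, norm_neg, norm_one]
  have hle : ‖s - w‖ ≤ ‖s + w‖ :=
    norm_sub_le_norm_add_of_nonneg
      (re_mul_re_nonneg_of_im_sq_eq (by rw [hsq]; simp) hs hw) (by positivity)
  have hw_le : ‖w‖ ≤ ‖s + w‖ := by
    have := norm_sub_le (s + w) (s - w)
    rw [show s + w - (s - w) = 2 * w by ring, norm_mul, Complex.norm_two] at this
    linarith
  have h₁ : ‖s - w‖ ^ 2 ≤ 1 := by nlinarith [norm_nonneg (s - w)]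
  have h₂ : (‖s - w‖ * ‖w‖) ^ 2 ≤ 1 := by
    rw [← one_pow 2, ← hprod]
    gcongr
  nlinarith

lemma norm_csqrtH_sub_sq_le {w : ℂ} (hw : 0 < w.im) :
    ‖csqrtH (w ^ 2 - 1) - w‖ ^ 2 ≤ 2 / (1 + ‖w‖ ^ 2) := by
  rw [le_div_iff₀ (by positivity)]
  exact norm_sub_sq_mul_one_add_norm_sq_le (csqrtH_sq _) (csqrtH_im_nonneg _) hw

lemma norm_slitAt_sub_sq_le (x : ℝ) {z : ℂ} (hz : 0 < z.im) :
    ‖slitAt x z - z‖ ^ 2 ≤ 2 / ((x - z.re) ^ 2 + (1 + z.im ^ 2)) := by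
  have hw : 0 < (z - x).im := by simpa using hz
  have hnorm : 1 + ‖z - x‖ ^ 2 = (x - z.re) ^ 2 + (1 + z.im ^ 2) := by
    rw [Complex.sq_norm, normSq_apply]
    simp only [sub_re, sub_im, ofReal_re, ofReal_im, sub_zero]
    ring
  rw [← hnorm, show slitAt x z - z = csqrtH ((z - x) ^ 2 - 1) - (z - x) by unfold slitAt; ring]
  exact norm_csqrtH_sub_sq_le hw

lemma measurable_slitAt (z : ℂ) : Measurable fun x : ℝ => slitAt x z := by
  unfold slitAt
  exact measurable_ofReal.add (measurable_csqrtH.comp (by fun_prop))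

lemma inv_sub_sq_add_sq_eq_mul_cauchyPDFReal (a x : ℝ) {c : ℝ} (hc : 0 < c) :
    ((x - a) ^ 2 + c ^ 2)⁻¹ = π / c * cauchyPDFReal a c.toNNReal x := by
  rw [cauchyPDFReal_def, Real.coe_toNNReal _ hc.le]
  field_simp

lemma integrable_inv_sub_sq_add_sq (a : ℝ) {c : ℝ} (hc : 0 < c) :
    Integrable fun x : ℝ => ((x - a) ^ 2 + c ^ 2)⁻¹ := by
  simp_rw [inv_sub_sq_add_sq_eq_mul_cauchyPDFReal a _ hc]
  exact (integrable_cauchyPDFReal a).const_mul _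

lemma integral_inv_sub_sq_add_sq (a : ℝ) {c : ℝ} (hc : 0 < c) :
    ∫ x : ℝ, ((x - a) ^ 2 + c ^ 2)⁻¹ = π / c := by
  simp_rw [inv_sub_sq_add_sq_eq_mul_cauchyPDFReal a _ hc]
  rw [integral_const_mul, integral_cauchyPDFReal_eq_one a (by simpa using hc), mul_one]

lemma two_mul_pi_div_sqrt_one_add_sq_lt {y : ℝ} (hy : 0 ≤ y) :
    2 * π / √(1 + y ^ 2) < 9 / (1 + y) := by
  have hb := Real.sq_sqrt (show 0 ≤ 1 + y ^ 2 by positivity)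
  have hb0 : 0 < √(1 + y ^ 2) := by positivity
  rw [div_lt_div_iff₀ hb0 (by linarith)]
  have hy2 : (1 + y) ^ 2 ≤ 2 * √(1 + y ^ 2) ^ 2 := by nlinarith [sq_nonneg (y - 1)]
  refine lt_of_pow_lt_pow_left₀ 2 (by positivity) ?_
  have hpi : π ^ 2 < 10 := by nlinarith [Real.pi_lt_d2, Real.pi_pos]
  calc (2 * π * (1 + y)) ^ 2 = 4 * π ^ 2 * (1 + y) ^ 2 := by ring
    _ ≤ 4 * π ^ 2 * (2 * √(1 + y ^ 2) ^ 2) := by gcongr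
    _ < (9 * √(1 + y ^ 2)) ^ 2 := by nlinarith

/-- `∫ℝ |s̃ₓ(z) - z|² dx < C/(1 + Im z)` uniformly over `z ∈ ℍ`. -/
theorem stmt_0 :
    ∃ C > (0:ℝ), ∀ z : ℂ, 0 < z.im →
      Integrable (fun x : ℝ => ‖slitAt x z - z‖ ^ 2) ∧
      (∫ x : ℝ, ‖slitAt x z - z‖ ^ 2) < C / (1 + z.im) := by
  refine ⟨9, by norm_num, fun z hz => ?_⟩
  set c := √(1 + z.im ^ 2)
  have hc : 0 < c := by positivity
  have hbound (x : ℝ) : ‖slitAt x z - z‖ ^ 2 ≤ 2 * ((x - z.re) ^ 2 + c ^ 2)⁻¹ := by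
    rw [Real.sq_sqrt (by positivity), ← div_eq_mul_inv]
    exact norm_slitAt_sub_sq_le x hz
  have hmajorant := (integrable_inv_sub_sq_add_sq z.re hc).const_mul 2
  have hint : Integrable fun x : ℝ => ‖slitAt x z - z‖ ^ 2 :=
    hmajorant.mono'
      (((measurable_slitAt z).sub_const z).norm.pow_const 2).aestronglyMeasurable
      (.of_forall fun x => by simpa using hbound x)
  refine ⟨hint, ?_⟩
  calc ∫ x : ℝ, ‖slitAt x z - z‖ ^ 2 ≤ ∫ x : ℝ, 2 * ((x - z.re) ^ 2 + c ^ 2)⁻¹ :=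
        integral_mono hint hmajorant hbound
    _ = 2 * π / c := by
        rw [integral_const_mul, integral_inv_sub_sq_add_sq z.re hc, mul_div_assoc]
    _ < 9 / (1 + z.im) := two_mul_pi_div_sqrt_one_add_sq_lt hz.le
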